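/- Achievability: For any finite source X on 𝒳, finite reproduction alphabet 𝒴, distortion measure d, distortion level D ≥ 0, ε ∈ [0,1) with P[min_y d(X,y) > D] ≤ ε, and t > 0, there exists a (possibly stochastic) encoder f : 𝒳 → {0,1}* and deterministic decoder g : {0,1}* → 𝒴 such that P[d(X, g(f(X))) > D] ≤ ε and (1/t)·log₂ E[2^{t·ℓ(f(X))}] ≤ G^{D,ε}_{1/(1+t)}(X), where G^{D,ε}_α(X) = min over conditional distributions P_{Y|X} with P[d(X,Y) > D] ≤ ε of the Rényi entropy H_α(Y) of the induced marginal of Y. -/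

import Mathlib

/-!
Let `α = 1/(1+t)`. Take a feasible channel `Q` minimising `∑_y P_Y(y)^α` (the feasible
channels form a compact set, nonempty because every `x` outside `S` has a `y` with
`d x y ≤ D`). The encoder draws `y` from `Q x` and sends a codeword of `y`: list the outputs
by decreasing marginal probability `P` and give the `i`-th one (from `0`) a binary string of
length `⌊log₂ (i+1)⌋`. Since `(i+1) P_i^α ≤ S := ∑_j P_j^α`, we get
`P_i 2^{t ℓ_i} ≤ P_i (i+1)^t ≤ S^t P_i^α`, hence `E[2^{t ℓ}] ≤ S^{1+t}`, and `S` is at most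
the corresponding sum for any feasible channel.
-/

open Real Finset

/-- Bijective base-2 numeration: the binary expansion of `n + 1` without its leading `1`. -/
def bijectiveBinary : ℕ → List Bool
  | 0 => []
  | n + 1 => n.bodd :: bijectiveBinary n.div2
decreasing_by rw [Nat.div2_val]; omega

def ofBijectiveBinary : List Bool → ℕ
  | [] => 0
  | b :: l => 2 * ofBijectiveBinary l + 1 + b.toNat

theorem ofBijectiveBinary_bijectiveBinary (n : ℕ) :
    ofBijectiveBinary (bijectiveBinary n) = n := by
  fun_induction bijectiveBinary n with
  | case1 => rfl
  | case2 n ih => rw [ofBijectiveBinary, ih]; have := Nat.bodd_add_div2 n; omega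

theorem bijectiveBinary_injective : Function.Injective bijectiveBinary :=
  Function.LeftInverse.injective ofBijectiveBinary_bijectiveBinary

theorem two_pow_length_bijectiveBinary_le (n : ℕ) : 2 ^ (bijectiveBinary n).length ≤ n + 1 := by
  fun_induction bijectiveBinary n with
  | case1 => rfl
  | case2 n ih => rw [List.length_cons, pow_succ, Nat.div2_val] at *; omega

theorem two_rpow_mul_length_bijectiveBinary_le (n : ℕ) {t : ℝ} (ht : 0 ≤ t) :
    (2 : ℝ) ^ (t * (bijectiveBinary n).length) ≤ ((n : ℝ) + 1) ^ t := by
  rw [mul_comm, rpow_mul zero_le_two, rpow_natCast]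
  gcongr
  exact_mod_cast two_pow_length_bijectiveBinary_le n

theorem exists_equiv_fin_antitone {ι : Type*} [Fintype ι] (f : ι → ℝ) :
    ∃ e : Fin (Fintype.card ι) ≃ ι, Antitone (f ∘ e) := by
  set e₀ := (Fintype.equivFin ι).symm
  let g : Fin (Fintype.card ι) → ℝᵒᵈ := fun i => OrderDual.toDual (f (e₀ i))
  exact ⟨(Tuple.sort g).trans e₀, fun i j hij => Tuple.monotone_sort g hij⟩

theorem succ_mul_le_sum_of_antitone {n : ℕ} {a : Fin n → ℝ} (ha : Antitone a)
    (ha₀ : ∀ i, 0 ≤ a i) (i : Fin n) : ((i : ℝ) + 1) * a i ≤ ∑ j, a j :=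
  calc ((i : ℝ) + 1) * a i = ∑ _j ∈ Iic i, a i := by simp
    _ ≤ ∑ j ∈ Iic i, a j := sum_le_sum fun j hj => ha (mem_Iic.mp hj)
    _ ≤ ∑ j, a j := sum_le_sum_of_subset_of_nonneg (subset_univ _) fun j _ _ => ha₀ j

theorem mul_rpow_le_of_mul_rpow_le {q k S t : ℝ} (ht : 0 < t) (hq : 0 ≤ q) (hk : 0 ≤ k)
    (h : k * q ^ (1 / (1 + t)) ≤ S) : q * k ^ t ≤ S ^ t * q ^ (1 / (1 + t)) := by
  have hsplit : q = q ^ (1 / (1 + t)) * (q ^ (1 / (1 + t))) ^ t := by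
    rw [← rpow_mul hq, ← rpow_add' hq (by positivity)]
    field_simp
    simp
  calc q * k ^ t = q ^ (1 / (1 + t)) * (k * q ^ (1 / (1 + t))) ^ t := by
        rw [mul_rpow hk (by positivity)]; nth_rw 1 [hsplit]; ring
    _ ≤ q ^ (1 / (1 + t)) * S ^ t := by gcongr
    _ = S ^ t * q ^ (1 / (1 + t)) := mul_comm _ _

theorem exists_injective_sum_mul_two_rpow_length_le {ι : Type*} [Fintype ι] (P : ι → ℝ)
    (hP : ∀ i, 0 ≤ P i) {t : ℝ} (ht : 0 < t) :
    ∃ c : ι → List Bool, Function.Injective c ∧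
      ∑ i, P i * (2 : ℝ) ^ (t * (c i).length) ≤ (∑ i, P i ^ (1 / (1 + t))) ^ (1 + t) := by
  obtain ⟨e, he⟩ := exists_equiv_fin_antitone P
  set S := ∑ i, P i ^ (1 / (1 + t))
  have hS : S = ∑ j, P (e j) ^ (1 / (1 + t)) := (e.sum_comp _).symm
  have hrank (j : Fin (Fintype.card ι)) : ((j : ℝ) + 1) * P (e j) ^ (1 / (1 + t)) ≤ S :=
    hS ▸ succ_mul_le_sum_of_antitone (fun i j hij => rpow_le_rpow (hP _) (he hij) (by positivity))
      (fun j => rpow_nonneg (hP _) _) j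
  refine ⟨fun i => bijectiveBinary (e.symm i),
    bijectiveBinary_injective.comp (Fin.val_injective.comp e.symm.injective), ?_⟩
  rw [← e.sum_comp]
  calc ∑ j, P (e j) * (2 : ℝ) ^ (t * (bijectiveBinary (e.symm (e j))).length)
      ≤ ∑ j, P (e j) * ((j : ℝ) + 1) ^ t := by
        gcongr with j
        · exact hP _
        · simpa using two_rpow_mul_length_bijectiveBinary_le j ht.le
    _ ≤ ∑ j, S ^ t * P (e j) ^ (1 / (1 + t)) :=
        sum_le_sum fun j _ => mul_rpow_le_of_mul_rpow_le ht (hP _) (by positivity) (hrank j)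
    _ = S ^ (1 + t) := by
        rw [← mul_sum, ← hS, add_comm, rpow_add' (sum_nonneg fun i _ => rpow_nonneg (hP i) _)
          (by positivity), rpow_one]

section Channels

variable {𝒳 𝒴 : Type*} [Fintype 𝒳]

def marginal (p : 𝒳 → ℝ) (Q : 𝒳 → 𝒴 → ℝ) (y : 𝒴) : ℝ := ∑ x, p x * Q x y

theorem marginal_nonneg {p : 𝒳 → ℝ} (hp : ∀ x, 0 ≤ p x) {Q : 𝒳 → 𝒴 → ℝ}
    (hQ : ∀ x y, 0 ≤ Q x y) (y : 𝒴) : 0 ≤ marginal p Q y :=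
  sum_nonneg fun x _ => mul_nonneg (hp x) (hQ x y)

variable [Fintype 𝒴]

theorem sum_mul_sum_eq_sum_marginal_mul (p : 𝒳 → ℝ) (Q : 𝒳 → 𝒴 → ℝ)
    (φ : 𝒴 → ℝ) :
    ∑ x, p x * ∑ y, Q x y * φ y = ∑ y, marginal p Q y * φ y := by
  simp only [marginal, mul_sum, sum_mul, mul_assoc]
  exact sum_comm

theorem sum_marginal {p : 𝒳 → ℝ} (hp : ∑ x, p x = 1) {Q : 𝒳 → 𝒴 → ℝ}
    (hQ : ∀ x, ∑ y, Q x y = 1) : ∑ y, marginal p Q y = 1 := by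
  simpa [hQ, hp] using (sum_mul_sum_eq_sum_marginal_mul p Q 1).symm

theorem continuous_sum_marginal_rpow (p : 𝒳 → ℝ) {α : ℝ} (hα : 0 ≤ α) :
    Continuous fun Q : 𝒳 → 𝒴 → ℝ => ∑ y, marginal p Q y ^ α :=
  continuous_finsetSum _ fun y _ =>
    (continuous_finsetSum _ fun x _ => by fun_prop).rpow_const fun _ => Or.inr hα

def feasibleChannels (p : 𝒳 → ℝ) (d : 𝒳 → 𝒴 → ℝ) (D ε : ℝ) :
    Set (𝒳 → 𝒴 → ℝ) :=
  Set.univ.pi (fun _ => stdSimplex ℝ 𝒴) ∩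
    {Q | ∑ x, p x * ∑ y ∈ univ.filter (fun y => D < d x y), Q x y ≤ ε}

theorem isCompact_feasibleChannels (p : 𝒳 → ℝ) (d : 𝒳 → 𝒴 → ℝ) (D ε : ℝ) :
    IsCompact (feasibleChannels p d D ε) :=
  (isCompact_univ_pi fun _ => isCompact_stdSimplex ℝ 𝒴).inter_right
    (isClosed_le (by fun_prop) continuous_const)

theorem feasibleChannels_nonempty [Nonempty 𝒴] {p : 𝒳 → ℝ} (hp : ∀ x, 0 ≤ p x)
    {d : 𝒳 → 𝒴 → ℝ} {D ε : ℝ} {S : Finset 𝒳} (hS : ∀ x, x ∈ S ↔ ∀ y : 𝒴, D < d x y)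
    (hfeas : ∑ x ∈ S, p x ≤ ε) : (feasibleChannels p d D ε).Nonempty := by
  classical
  have hgood (x : 𝒳) : ∃ y, x ∉ S → d x y ≤ D := by
    by_cases hx : x ∈ S
    · exact ⟨Classical.arbitrary 𝒴, fun h => (h hx).elim⟩
    · obtain ⟨y, hy⟩ : ∃ y, d x y ≤ D := by simpa [hS] using hx
      exact ⟨y, fun _ => hy⟩
  choose φ hφ using hgood
  refine ⟨fun x => Pi.single (φ x) 1, fun x _ => single_mem_stdSimplex ℝ (φ x), ?_⟩
  calc ∑ x, p x * ∑ y ∈ univ.filter (fun y => D < d x y), Pi.single (φ x) (1 : ℝ) y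
      = ∑ x ∈ univ.filter (fun x => D < d x (φ x)), p x := by
        simp [sum_pi_single', sum_filter]
    _ ≤ ∑ x ∈ S, p x := sum_le_sum_of_subset_of_nonneg
        (fun x hx => by_contra fun hxS => (hφ x hxS).not_gt (mem_filter.mp hx).2)
        fun x _ _ => hp x
    _ ≤ ε := hfeas

end Channels

section Pushforward

variable {ι β : Type*} [Fintype ι] [DecidableEq β]

def pushforwardWeight (c : ι → β) (q : ι → ℝ) (b : β) : ℝ :=
  ∑ i, if c i = b then q i else 0

theorem pushforwardWeight_nonneg (c : ι → β) {q : ι → ℝ} (hq : ∀ i, 0 ≤ q i) (b : β) :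
    0 ≤ pushforwardWeight c q b :=
  sum_nonneg fun i _ => by split_ifs <;> simp [hq i]

theorem pushforwardWeight_eq_zero_of_notMem_image {c : ι → β} (q : ι → ℝ) {b : β}
    (hb : b ∉ univ.image c) : pushforwardWeight c q b = 0 :=
  sum_eq_zero fun i _ => if_neg fun h : c i = b => hb (h ▸ mem_image_of_mem c (mem_univ i))

theorem sum_image_pushforwardWeight_mul (c : ι → β) (q : ι → ℝ) (φ : β → ℝ) :
    ∑ b ∈ univ.image c, pushforwardWeight c q b * φ b = ∑ i, q i * φ (c i) := by
  simp only [pushforwardWeight, sum_mul, ite_mul, zero_mul]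
  rw [sum_comm]
  exact sum_congr rfl fun i _ => by rw [sum_ite_eq, if_pos (mem_image_of_mem c (mem_univ i))]

theorem sum_filter_image_pushforwardWeight (c : ι → β) (q : ι → ℝ) (P : β → Prop)
    [DecidablePred P] :
    ∑ b ∈ (univ.image c).filter P, pushforwardWeight c q b =
      ∑ i ∈ univ.filter (P ∘ c), q i := by
  simpa only [sum_filter, mul_boole, Function.comp_apply] using
    sum_image_pushforwardWeight_mul c q fun b => if P b then 1 else 0

end Pushforward

theorem one_div_mul_logb_le_of_le_rpow {A S S' t : ℝ} (ht : 0 < t) (hA : 0 < A) (hS : 0 ≤ S)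
    (hAS : A ≤ S ^ (1 + t)) (hSS' : S ≤ S') :
    1 / t * logb 2 A ≤ (1 + t) / t * logb 2 S' := by
  have hS₀ : 0 < S := hS.lt_of_ne fun h => by
    rw [← h, zero_rpow (by positivity)] at hAS; linarith
  calc 1 / t * logb 2 A ≤ 1 / t * logb 2 (S ^ (1 + t)) := by gcongr; norm_num
    _ = (1 + t) / t * logb 2 S := by rw [logb_rpow_eq_mul_logb_of_pos hS₀]; ring
    _ ≤ (1 + t) / t * logb 2 S' := by gcongr; norm_num

theorem lossy_achievability_general {𝒳 𝒴 : Type*} [Fintype 𝒳] [Fintype 𝒴] [Nonempty 𝒴]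
    (p : 𝒳 → ℝ) (hp : ∀ x, 0 ≤ p x) (hpsum : ∑ x, p x = 1)
    (d : 𝒳 → 𝒴 → ℝ)
    (D : ℝ) (ε : ℝ)
    (S : Finset 𝒳) (hS : ∀ x, x ∈ S ↔ ∀ y : 𝒴, D < d x y)
    (hfeas : ∑ x ∈ S, p x ≤ ε)
    (t : ℝ) (ht : 0 < t) :
    ∃ (W : Finset (List Bool)) (f : 𝒳 → List Bool → ℝ) (g : List Bool → 𝒴),
      (∀ x w, 0 ≤ f x w) ∧
      (∀ x, ∀ w ∉ W, f x w = 0) ∧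
      (∀ x, ∑ w ∈ W, f x w = 1) ∧
      -- excess distortion probability at most ε
      (∑ x, p x * ∑ w ∈ W.filter (fun w => D < d x (g w)), f x w) ≤ ε ∧
      -- cumulant generating function bounded by the Rényi-entropy-based quantity
      (∀ Q : 𝒳 → 𝒴 → ℝ,
        (∀ x y, 0 ≤ Q x y) → (∀ x, ∑ y, Q x y = 1) →
        (∑ x, p x * ∑ y ∈ Finset.univ.filter (fun y => D < d x y), Q x y) ≤ ε →
        (1 / t) * Real.logb 2
            (∑ x, p x * ∑ w ∈ W, f x w * (2 : ℝ) ^ (t * (w.length : ℝ)))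
          ≤ ((1 + t) / t) *
              Real.logb 2 (∑ y, (∑ x, p x * Q x y) ^ (1 / (1 + t )))) := by
  classical
  obtain ⟨Q, ⟨hQ, hQε⟩, hQmin⟩ := (isCompact_feasibleChannels p d D ε).exists_isMinOn
    (feasibleChannels_nonempty hp hS hfeas)
    (f := fun Q => ∑ y, marginal p Q y ^ (1 / (1 + t)))
    (continuous_sum_marginal_rpow p (by positivity)).continuousOn
  have hQ₀ (x : 𝒳) : ∀ y, 0 ≤ Q x y := (hQ x trivial).1
  have hQ₁ (x : 𝒳) : ∑ y, Q x y = 1 := (hQ x trivial).2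
  obtain ⟨c, hc, hcode⟩ :=
    exists_injective_sum_mul_two_rpow_length_le (marginal p Q) (marginal_nonneg hp hQ₀) ht
  refine ⟨univ.image c, fun x => pushforwardWeight c (Q x), Function.invFun c,
    fun x => pushforwardWeight_nonneg c (hQ₀ x),
    fun x _ => pushforwardWeight_eq_zero_of_notMem_image _,
    fun x => by simpa [hQ₁ x] using sum_image_pushforwardWeight_mul c (Q x) 1, ?_, ?_⟩
  · simpa [sum_filter_image_pushforwardWeight, Function.comp_def, Function.leftInverse_invFun hc _]
      using hQε
  · intro Q' hQ'₀ hQ'₁ hQ'ε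
    simp only [sum_image_pushforwardWeight_mul, sum_mul_sum_eq_sum_marginal_mul]
    have hcgf_pos : 0 < ∑ y, marginal p Q y * (2 : ℝ) ^ (t * (c y).length) :=
      calc (0 : ℝ) < ∑ y, marginal p Q y := by rw [sum_marginal hpsum hQ₁]; exact one_pos
        _ ≤ _ := sum_le_sum fun y _ => le_mul_of_one_le_right (marginal_nonneg hp hQ₀ y)
          (one_le_rpow one_le_two (by positivity))
    exact one_div_mul_logb_le_of_le_rpow ht hcgf_pos
      (sum_nonneg fun y _ => rpow_nonneg (marginal_nonneg hp hQ₀ y) _) hcode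
      (hQmin ⟨fun x _ => ⟨hQ'₀ x, hQ'₁ x⟩, hQ'ε⟩)

/-- Achievability. For a finite source `X` with pmf `p` on `𝒳`, finite
reproduction alphabet `𝒴`, distortion measure `d`, `D ≥ 0`, `ε ∈ [0,1)` with
`P[min_y d(X,y) > D] ≤ ε`, and `t > 0`, there exist a finite codeword set
`W ⊆ {0,1}*`, a (possibly stochastic) encoder `f : 𝒳 → (W → [0,1])` and a
deterministic decoder `g : {0,1}* → 𝒴` such that `P[d(X, g(f(X))) > D] ≤ ε` and
`(1/t)·log₂ E[2^{t·ℓ(f(X))}] ≤ G^{D,ε}_{1/(1+t)}(X)`, the latter expressed as: the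
cumulant generating function is at most the Rényi entropy `H_{1/(1+t)}` of the
output marginal of every conditional distribution `Q = P_{Y|X}` satisfying
`P[d(X,Y) > D] ≤ ε`. -/
theorem lossy_achievability {𝒳 𝒴 : Type*} [Fintype 𝒳] [Fintype 𝒴] [Nonempty 𝒴]
    (p : 𝒳 → ℝ) (hp : ∀ x, 0 ≤ p x) (hpsum : ∑ x, p x = 1)
    (d : 𝒳 → 𝒴 → ℝ) (hd : ∀ x y, 0 ≤ d x y)
    (D : ℝ) (hD : 0 ≤ D) (ε : ℝ) (hε0 : 0 ≤ ε) (hε1 : ε < 1)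
    (S : Finset 𝒳) (hS : ∀ x, x ∈ S ↔ ∀ y : 𝒴, D < d x y)
    (hfeas : ∑ x ∈ S, p x ≤ ε)
    (t : ℝ) (ht : 0 < t) :
    ∃ (W : Finset (List Bool)) (f : 𝒳 → List Bool → ℝ) (g : List Bool → 𝒴),
      (∀ x w, 0 ≤ f x w) ∧
      (∀ x, ∀ w ∉ W, f x w = 0) ∧
      (∀ x, ∑ w ∈ W, f x w = 1) ∧
      -- excess distortion probability at most ε
      (∑ x, p x * ∑ w ∈ W.filter (fun w => D < d x (g w)), f x w) ≤ ε ∧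
      -- cumulant generating function bounded by the Rényi-entropy-based quantity
      (∀ Q : 𝒳 → 𝒴 → ℝ,
        (∀ x y, 0 ≤ Q x y) → (∀ x, ∑ y, Q x y = 1) →
        (∑ x, p x * ∑ y ∈ Finset.univ.filter (fun y => D < d x y), Q x y) ≤ ε →
        (1 / t) * Real.logb 2
            (∑ x, p x * ∑ w ∈ W, f x w * (2 : ℝ) ^ (t * (w.length : ℝ)))
          ≤ ((1 + t) / t) *
              Real.logb 2 (∑ y, (∑ x, p x * Q x y) ^ (1 / (1 + t )))) :=
  lossy_achievability_general p hp hpsum d D ε S hS hfeas t ht
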